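/- arXiv:1604.05155 — 5 statements merged into one kernel-verified Lean document; each statement's English description precedes it below -/
import Mathlib

section
/- A real number x ∈ (0,1] has a finite ECF expansion, i.e. T_E^n x = 0 for some n ≥ 1, if and only if x is rational. -/
open Set

/-- The Engel continued fraction map, with the convention `T_E 0 = 0`. -/
noncomputable def ecfT (x : ℝ) : ℝ :=
  if x = 0 then 0 else (1 / (⌊1 / x⌋ : ℝ)) * (1 / x - (⌊1 / x⌋ : ℝ))

/-!
Write `a = ⌊x⁻¹⌋`, so that `x⁻¹ = a (1 + T_E x)`. For `x ≤ 1`, `x ≠ 0` we have `a ≠ 0`, so `x` is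
rational as soon as `T_E x` is; since `T_E x < 1`, induction on the length of the expansion shows
that finite expansions give rationals. Conversely `T_E (p / d) = (d mod p) / (⌊d / p⌋ p)` has a
smaller numerator than `p / d`, so the expansion of a nonnegative rational terminates.
-/

theorem ecfT_eq_fract_div_floor (x : ℝ) : ecfT x = Int.fract x⁻¹ / ⌊x⁻¹⌋ := by
  simp only [ecfT, Int.fract, one_div]
  split_ifs with hx
  · simp [hx]
  · exact (div_eq_inv_mul _ _).symm

theorem ecfT_lt_one (x : ℝ) : ecfT x < 1 := by
  rw [ecfT_eq_fract_div_floor]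
  rcases le_or_gt ⌊x⁻¹⌋ 0 with ha | ha
  · exact (div_nonpos_of_nonneg_of_nonpos (Int.fract_nonneg _) (by exact_mod_cast ha)).trans_lt
      one_pos
  · calc Int.fract x⁻¹ / ⌊x⁻¹⌋ ≤ Int.fract x⁻¹ :=
          div_le_self (Int.fract_nonneg _) (by exact_mod_cast ha)
      _ < 1 := Int.fract_lt_one _

theorem floor_inv_ne_zero {x : ℝ} (h0 : x ≠ 0) (h1 : x ≤ 1) : ⌊x⁻¹⌋ ≠ 0 := by
  rw [Ne, Int.floor_eq_zero_iff, mem_Ico, not_and, not_lt]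
  intro hinv
  exact one_le_inv₀ ((inv_nonneg.mp hinv).lt_of_ne' h0) |>.mpr h1

theorem inv_eq_floor_mul_one_add_ecfT {x : ℝ} (ha : ⌊x⁻¹⌋ ≠ 0) :
    x⁻¹ = ⌊x⁻¹⌋ * (1 + ecfT x) := by
  rw [ecfT_eq_fract_div_floor, mul_add, mul_div_cancel₀ _ (by exact_mod_cast ha), mul_one,
    Int.floor_add_fract]

theorem exists_rat_eq_of_ecfT_eq_rat {x : ℝ} (ha : ⌊x⁻¹⌋ ≠ 0) (h : ∃ q : ℚ, ecfT x = q) :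
    ∃ q : ℚ, x = q := by
  obtain ⟨q, hq⟩ := h
  refine ⟨(⌊x⁻¹⌋ * (1 + q))⁻¹, ?_⟩
  conv_lhs => rw [← inv_inv x, inv_eq_floor_mul_one_add_ecfT ha, hq]
  push_cast
  rfl

theorem exists_rat_eq_of_iterate_ecfT_eq_zero {n : ℕ} {x : ℝ} (hx : x ≤ 1)
    (h : ecfT^[n] x = 0) : ∃ q : ℚ, x = q := by
  induction n generalizing x with
  | zero => exact ⟨0, by simpa using h⟩
  | succ n ih =>
    rcases eq_or_ne x 0 with rfl | h0
    · exact ⟨0, by simp⟩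
    · exact exists_rat_eq_of_ecfT_eq_rat (floor_inv_ne_zero h0 hx) (ih (ecfT_lt_one x).le h)

theorem ecfT_natCast_div (p d : ℕ) : ecfT (p / d) = (d % p : ℕ) / (d / p * p : ℕ) := by
  rw [ecfT_eq_fract_div_floor, inv_div, Int.fract_div_natCast_eq_div_natCast_mod,
    Int.floor_div_natCast, Int.floor_natCast, ← Int.natCast_div, Int.cast_natCast,
    div_div, mul_comm, Nat.cast_mul]

theorem exists_iterate_ecfT_natCast_div_eq_zero (p d : ℕ) :
    ∃ n, 0 < n ∧ ecfT^[n] (p / d) = 0 := by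
  induction p using Nat.strong_induction_on generalizing d with
  | _ p ih =>
    rcases Nat.eq_zero_or_pos p with rfl | hp
    · exact ⟨1, one_pos, by simp [ecfT]⟩
    · obtain ⟨n, hn, h⟩ := ih (d % p) (Nat.mod_lt d hp) (d / p * p)
      exact ⟨n + 1, n.succ_pos, by rwa [Function.iterate_succ_apply, ecfT_natCast_div]⟩

theorem exists_iterate_ecfT_ratCast_eq_zero (q : ℚ) (hq : 0 ≤ q) :
    ∃ n, 0 < n ∧ ecfT^[n] q = 0 := by
  lift q to ℚ≥0 using hq
  rw [Rat.cast_nnratCast, NNRat.cast_def]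
  exact exists_iterate_ecfT_natCast_div_eq_zero _ _

/-- A real `x ∈ (0,1]` has a finite ECF expansion iff it is rational. -/
theorem ecf_finite_iff_rational (x : ℝ) (hx : x ∈ Set.Ioc (0 : ℝ) 1) :
    (∃ n : ℕ, 1 ≤ n ∧ ecfT^[n] x = 0) ↔ ∃ q : ℚ, x = (q : ℝ) := by
  constructor
  · rintro ⟨n, -, hn⟩
    exact exists_rat_eq_of_iterate_ecfT_eq_zero hx.2 hn
  · rintro ⟨q, rfl⟩
    exact exists_iterate_ecfT_ratCast_eq_zero q (Rat.cast_pos.mp hx.1).le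
end

section
/- Characterization of admissible sequences: a sequence (b_1, b_2, …, b_n, …) of positive integers is admissible for ECF expansions (that is, for every n ≥ 1 there exists x ∈ (0,1] with b_j(x) = b_j for all 1 ≤ j ≤ n) if and only if b_{n+1} ≥ b_n for all n ≥ 1. -/
/-!
If `⌊1/y⌋ = k ≥ 1` then `T_E y = (1/y - k)/k < 1/k`, so the next partial quotient is at least `k`.
Conversely, `t ↦ 1/(k(1+t))` is an inverse branch of `T_E` with partial quotient `k` at every
`t ≥ 0` with `k t < 1`, and for `t > 0` its value `y` again satisfies `k' y < 1` for all `k' ≤ k`.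
So the branches of a non-decreasing block `b_1 ≤ … ≤ b_n` compose, applied to a small enough
`t > 0`, to a point with exactly these partial quotients.
-/

open Set

/-- The `n`-th partial quotient of the ECF expansion (`n ≥ 1`). -/
noncomputable def ecfB (n : ℕ) (x : ℝ) : ℤ := ⌊1 / (ecfT^[n - 1] x)⌋

theorem pos_of_one_le_floor_one_div {y : ℝ} (h : 1 ≤ ⌊1 / y⌋) : 0 < y := by
  have : (1 : ℝ) ≤ 1 / y := by exact_mod_cast Int.le_floor.mp h
  exact one_div_pos.mp (by linarith)

theorem floor_one_div_le_floor_one_div_ecfT {y : ℝ} (hy : 1 ≤ ⌊1 / y⌋) (hTy : 0 < ecfT y) :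
    ⌊1 / y⌋ ≤ ⌊1 / ecfT y⌋ := by
  set k := ⌊1 / y⌋ with hk
  have hk_pos : (0 : ℝ) < k := by exact_mod_cast hy
  have hTy_lt : ecfT y < 1 / k := by
    have hfract : 1 / y - k < 1 := by linarith [Int.lt_floor_add_one (1 / y)]
    rw [ecfT, if_neg (pos_of_one_le_floor_one_div hy).ne', ← hk, one_div_mul_eq_div,
      div_lt_div_iff_of_pos_right hk_pos]
    exact hfract
  exact Int.le_floor.mpr ((lt_one_div hk_pos hTy).mpr hTy_lt).le

theorem ecfB_succ {n : ℕ} (hn : 1 ≤ n) (x : ℝ) :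
    ecfB (n + 1) x = ⌊1 / ecfT (ecfT^[n - 1] x)⌋ := by
  obtain ⟨m, rfl⟩ : ∃ m, n = m + 1 := ⟨n - 1, by omega⟩
  simp only [ecfB, Nat.add_sub_cancel, Function.iterate_succ_apply']

noncomputable def ecfInvBranch (k : ℤ) (t : ℝ) : ℝ := 1 / (k * (1 + t))

section InvBranch

variable {k : ℤ} {t : ℝ}

theorem ecfInvBranch_pos (hk : 1 ≤ k) (ht : 0 ≤ t) : 0 < ecfInvBranch k t := by
  have : (1 : ℝ) ≤ k := by exact_mod_cast hk
  unfold ecfInvBranch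
  positivity

theorem mul_ecfInvBranch_lt_one (ht : 0 < t) : (k : ℝ) * ecfInvBranch k t < 1 := by
  rcases eq_or_ne (k : ℝ) 0 with hk | hk
  · simp [hk]
  · calc (k : ℝ) * ecfInvBranch k t = 1 / (1 + t) := by
          rw [ecfInvBranch]
          field_simp
      _ < 1 := (div_lt_one (by linarith)).mpr (by linarith)

theorem one_div_ecfInvBranch : 1 / ecfInvBranch k t = k + k * t := by
  rw [ecfInvBranch, one_div_one_div]
  ring

theorem floor_one_div_ecfInvBranch (hk : 1 ≤ k) (ht : 0 ≤ t) (hkt : (k : ℝ) * t < 1) :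
    ⌊1 / ecfInvBranch k t⌋ = k := by
  have : (1 : ℝ) ≤ k := by exact_mod_cast hk
  rw [one_div_ecfInvBranch, Int.floor_eq_iff]
  constructor <;> nlinarith

theorem ecfT_ecfInvBranch (hk : 1 ≤ k) (ht : 0 ≤ t) (hkt : (k : ℝ) * t < 1) :
    ecfT (ecfInvBranch k t) = t := by
  have hk0 : (k : ℝ) ≠ 0 := by exact_mod_cast (show k ≠ 0 by omega)
  rw [ecfT, if_neg (ecfInvBranch_pos hk ht).ne', floor_one_div_ecfInvBranch hk ht hkt,
    one_div_ecfInvBranch]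
  field_simp
  ring

end InvBranch

theorem exists_floor_iterate_ecfT_eq_of_monotone {b : ℕ → ℤ} (h1 : 1 ≤ b 0) (hb : Monotone b)
    (m : ℕ) : ∃ x : ℝ, 0 < x ∧ (b 0 : ℝ) * x < 1 ∧ ∀ j < m, ⌊1 / ecfT^[j] x⌋ = b j := by
  induction m generalizing b with
  | zero =>
    have hb0 : (0 : ℝ) < b 0 := by exact_mod_cast h1
    refine ⟨1 / (b 0 + 1), by positivity, ?_, by simp⟩
    rw [mul_one_div, div_lt_one (by linarith)]
    linarith
  | succ m ih =>
    obtain ⟨y, hy, hby, hdigits⟩ :=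
      ih (b := fun i => b (i + 1)) (h1.trans (hb (Nat.zero_le 1))) fun _ _ h => hb (by omega)
    have hb01 : (b 0 : ℝ) ≤ b 1 := by exact_mod_cast hb (Nat.zero_le 1)
    have hb0y : (b 0 : ℝ) * y < 1 := by nlinarith
    refine ⟨ecfInvBranch (b 0) y, ecfInvBranch_pos h1 hy.le, mul_ecfInvBranch_lt_one hy, ?_⟩
    rintro (_ | j) hj
    · exact floor_one_div_ecfInvBranch h1 hy.le hb0y
    · rw [Function.iterate_succ_apply, ecfT_ecfInvBranch h1 hy.le hb0y]
      exact hdigits j (by omega)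

theorem exists_mem_Ioc_floor_iterate_ecfT_eq_of_monotone {b : ℕ → ℤ} (h1 : 1 ≤ b 0)
    (hb : Monotone b) (m : ℕ) :
    ∃ x ∈ Ioc (0 : ℝ) 1, ∀ j < m, ⌊1 / ecfT^[j] x⌋ = b j := by
  obtain ⟨x, hx, hbx, hdigits⟩ := exists_floor_iterate_ecfT_eq_of_monotone h1 hb m
  have : (1 : ℝ) ≤ b 0 := by exact_mod_cast h1
  exact ⟨x, ⟨hx, by nlinarith⟩, hdigits⟩

/-- A sequence `(b_1, b_2, …)` of positive integers is admissible for ECF expansions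
(every finite initial block is realized by some `x ∈ (0,1]`) iff it is non-decreasing. -/
theorem ecf_admissible_iff (b : ℕ → ℤ) (hb : ∀ n, 1 ≤ n → 1 ≤ b n) :
    (∀ n : ℕ, 1 ≤ n → ∃ x ∈ Set.Ioc (0 : ℝ) 1,
        ∀ j : ℕ, 1 ≤ j → j ≤ n → ecfB j x = b j) ↔
    (∀ n : ℕ, 1 ≤ n → b n ≤ b (n + 1)) := by
  constructor
  · intro H n hn
    obtain ⟨x, -, hdigits⟩ := H (n + 1) (by omega)
    have hcur : ⌊1 / ecfT^[n - 1] x⌋ = b n := hdigits n hn (by omega)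
    have hnext : ⌊1 / ecfT (ecfT^[n - 1] x)⌋ = b (n + 1) := by
      rw [← ecfB_succ hn]
      exact hdigits (n + 1) (by omega) le_rfl
    rw [← hcur, ← hnext]
    refine floor_one_div_le_floor_one_div_ecfT (hcur ▸ hb n hn) ?_
    exact pos_of_one_le_floor_one_div (hnext ▸ hb (n + 1) (by omega))
  · intro H n _
    obtain ⟨x, hx, hdigits⟩ := exists_mem_Ioc_floor_iterate_ecfT_eq_of_monotone (b := (b <| · + 1))
      (hb 1 le_rfl) (monotone_nat_of_le_succ fun i => H (i + 1) (by omega)) n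
    refine ⟨x, hx, fun j hj hjn => ?_⟩
    rw [ecfB, hdigits (j - 1) (by omega), Nat.sub_add_cancel hj]
end

section
/- Structure and length of cylinders: let (b_1, …, b_n) be an admissible sequence. Then the n-th order cylinder B(b_1, …, b_n) is an interval whose two endpoints are the finite ECF values [[b_1, …, b_{n−1}, b_n]] and [[b_1, …, b_{n−1}, b_n + 1]]; consequently, its Lebesgue measure is P(B(b_1, …, b_n)) = (∏_{i=1}^{n−1} b_i) / (Q_n·(Q_n + Q_{n−1})). -/
/-!
On `{x | ⌊1/x⌋ = β}` the map `T_E` is inverted by the decreasing branch `y ↦ 1/(β + β y)`,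
so `B(b_1, …, b_{n+1})` is the image of `B(b_2, …, b_{n+1}) ∩ {y < 1/b_1}` under the branch
of `b_1`. The endpoints of `B(b_2, …, b_{n+1})` are at most `1/b_2 ≤ 1/b_1`, so the cut loses
no interior point, and induction on `n` traps `B(b_1, …, b_n)` between `[[b_1, …, b_n]]` and
`[[b_1, …, b_n + 1]]`, open interval included.

For the length, `s ↦ [[b_1, …, b_{n-1}, tail s]]` is the composition of the branches, i.e. the
Möbius map of the matrix product `M = ∏ !![0, 1; b_i, b_i]`. Its bottom row is
`(b_{n-1} Q_{n-2}, Q_{n-1})` and `det M = ∏ (-b_i)`; evaluating at `s = 1/b_n` and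
`s = 1/(b_n + 1)` gives the difference of the endpoints.
-/

open MeasureTheory Set

/-- The finite ECF value `[[c_1, …, c_m]]`, defined by `[[c_m]] = 1/c_m` and
`[[c_k, …, c_m]] = 1/(c_k + c_k [[c_{k+1}, …, c_m]])` (`ecfVal [] = 0`). -/
noncomputable def ecfVal : List ℕ → ℝ
  | [] => 0
  | c :: rest => 1 / (c + c * ecfVal rest)

/-- The continuants `Q_k` of the ECF expansion: `Q_0 = 1`, `Q_1 = b_1`,
`Q_k = b_k Q_{k-1} + b_{k-1} Q_{k-2}` (equivalently `Q_{-1} = 0`). -/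
def ecfQ (b : ℕ → ℕ) : ℕ → ℤ
  | 0 => 1
  | 1 => (b 1 : ℤ)
  | (k + 2) => (b (k + 2) : ℤ) * ecfQ b (k + 1) + (b (k + 1) : ℤ) * ecfQ b k

theorem StrictAntiOn.mapsTo_uIoo {α β : Type*} [LinearOrder α] [LinearOrder β] {f : α → β}
    {a b : α} (hf : StrictAntiOn f (uIcc a b)) : MapsTo f (uIoo a b) (uIoo (f a) (f b)) := by
  intro x hx
  have hxI : x ∈ uIcc a b := uIoo_subset_uIcc_self hx
  rcases le_total a b with hab | hab
  · rw [uIoo_of_le hab] at hx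
    rw [uIoo_of_ge (hf.antitoneOn left_mem_uIcc right_mem_uIcc hab)]
    exact ⟨hf hxI right_mem_uIcc hx.2, hf left_mem_uIcc hxI hx.1⟩
  · rw [uIoo_of_ge hab] at hx
    rw [uIoo_of_le (hf.antitoneOn right_mem_uIcc left_mem_uIcc hab)]
    exact ⟨hf hxI left_mem_uIcc hx.2, hf right_mem_uIcc hxI hx.1⟩

theorem Real.volume_eq_of_uIoo_subset_of_subset_uIcc {s : Set ℝ} {a b : ℝ}
    (h₁ : uIoo a b ⊆ s) (h₂ : s ⊆ uIcc a b) : volume s = ENNReal.ofReal |b - a| :=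
  le_antisymm (Real.volume_interval ▸ measure_mono h₂) (Real.volume_uIoo ▸ measure_mono h₁)

-- The inverse of `ecfT` on `{x | ⌊1 / x⌋ = β}`; `ecfVal` composes these branches.
noncomputable def ecfBranch (β : ℕ) (y : ℝ) : ℝ := 1 / (β + β * y)

theorem ecfVal_cons (c : ℕ) (l : List ℕ) : ecfVal (c :: l) = ecfBranch c (ecfVal l) := rfl

theorem ecfVal_eq_foldr (l : List ℕ) : ecfVal l = l.foldr ecfBranch 0 := by
  induction l with
  | nil => rfl
  | cons c l ih => rw [ecfVal_cons, ih, List.foldr_cons]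

theorem ecfVal_append (l m : List ℕ) : ecfVal (l ++ m) = l.foldr ecfBranch (ecfVal m) := by
  rw [ecfVal_eq_foldr, List.foldr_append, ← ecfVal_eq_foldr]

theorem ecfBranch_pos {β : ℕ} (hβ : 0 < β) {y : ℝ} (hy : 0 ≤ y) : 0 < ecfBranch β y := by
  unfold ecfBranch; positivity

theorem ecfBranch_le {β : ℕ} (hβ : 0 < β) {y : ℝ} (hy : 0 ≤ y) :
    ecfBranch β y ≤ 1 / β :=
  one_div_le_one_div_of_le (by positivity) (by nlinarith [(Nat.cast_pos.2 hβ : (0 : ℝ) < β)])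

theorem ecfVal_nonneg (l : List ℕ) : 0 ≤ ecfVal l := by
  induction l with
  | nil => exact le_rfl
  | cons c l ih => rw [ecfVal_cons, ecfBranch]; positivity

theorem strictAntiOn_ecfBranch {β : ℕ} (hβ : 0 < β) : StrictAntiOn (ecfBranch β) (Ici 0) := by
  intro y (hy : 0 ≤ y) z _ hyz
  have hβ' : (0 : ℝ) < β := Nat.cast_pos.2 hβ
  exact one_div_lt_one_div_of_lt (by positivity) (by nlinarith)

theorem uIoo_ecfBranch_subset_image {β : ℕ} (hβ : 0 < β) {a b : ℝ} (ha : 0 ≤ a)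
    (hb : 0 ≤ b) :
    uIoo (ecfBranch β a) (ecfBranch β b) ⊆ ecfBranch β '' uIoo a b := by
  have hβ' : (0 : ℝ) < β := Nat.cast_pos.2 hβ
  set ψ : ℝ → ℝ := fun x => 1 / (β * x) - 1
  have hψ_anti : StrictAntiOn ψ (Ioi 0) := fun x hx y hy hxy =>
    sub_lt_sub_right (one_div_lt_one_div_of_lt (mul_pos hβ' hx) (by gcongr)) 1
  have hψ_branch : ∀ y : ℝ, 0 ≤ y → ψ (ecfBranch β y) = y := fun y hy => by
    simp only [ψ, ecfBranch]; field_simp; ring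
  intro x hx
  have hsub : uIcc (ecfBranch β a) (ecfBranch β b) ⊆ Ioi 0 :=
    (ordConnected_Ioi).uIcc_subset (ecfBranch_pos hβ ha) (ecfBranch_pos hβ hb)
  have hx0 : 0 < x := hsub (uIoo_subset_uIcc_self hx)
  refine ⟨ψ x, ?_, ?_⟩
  · simpa only [hψ_branch a ha, hψ_branch b hb] using (hψ_anti.mono hsub).mapsTo_uIoo hx
  · simp only [ψ, ecfBranch]; field_simp; ring

theorem ecfB_one (x : ℝ) : ecfB 1 x = ⌊1 / x⌋ := rfl

theorem ecfB_succ_s7 {i : ℕ} (hi : 1 ≤ i) (x : ℝ) : ecfB (i + 1) x = ecfB i (ecfT x) := by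
  rw [ecfB, ecfB, show i + 1 - 1 = i - 1 + 1 by omega, Function.iterate_succ_apply]

theorem mem_Ioc_of_one_le_floor_one_div {x : ℝ} (h : 1 ≤ ⌊1 / x⌋) : x ∈ Ioc 0 1 := by
  have h1 : (1 : ℝ) ≤ 1 / x := by exact_mod_cast Int.le_floor.1 h
  have hx : 0 < x := one_div_pos.1 (one_pos.trans_le h1)
  exact ⟨hx, by rwa [le_div_iff₀ hx, one_mul] at h1⟩

theorem floor_one_div_eq_iff {x : ℝ} (hx : 0 < x) {β : ℕ} (hβ : 0 < β) :
    ⌊1 / x⌋ = β ↔ x ∈ Ioc (1 / (β + 1) : ℝ) (1 / β) := by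
  have hβ' : (0 : ℝ) < β := Nat.cast_pos.2 hβ
  rw [Int.floor_eq_iff, Int.cast_natCast, le_one_div hβ' hx, one_div_lt hx (by positivity)]
  exact and_comm

theorem ecfBranch_ecfT {x : ℝ} (hx : 0 < x) {β : ℕ} (hβ : 0 < β) (h : ⌊1 / x⌋ = β) :
    ecfBranch β (ecfT x) = x ∧ β * ecfT x < 1 := by
  have hβ' : (β : ℝ) ≠ 0 := Nat.cast_ne_zero.2 hβ.ne'
  have hlt : 1 < (β + 1) * x := by
    rw [← div_lt_iff₀ hx]; exact_mod_cast h ▸ Int.lt_floor_add_one (1 / x)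
  rw [ecfT, if_neg hx.ne', h, Int.cast_natCast]
  refine ⟨?_, by field_simp; linarith⟩
  rw [ecfBranch]; field_simp; ring

theorem floor_one_div_ecfBranch {β : ℕ} {y : ℝ} (hy : 0 ≤ y) (hβy : β * y < 1) :
    ⌊1 / ecfBranch β y⌋ = β := by
  rw [ecfBranch, one_div_one_div, Int.floor_eq_iff, Int.cast_natCast]
  constructor <;> nlinarith [(Nat.cast_nonneg β : (0 : ℝ) ≤ β)]

theorem ecfT_ecfBranch {β : ℕ} (hβ : 0 < β) {y : ℝ} (hy : 0 ≤ y) (hβy : β * y < 1) :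
    ecfT (ecfBranch β y) = y := by
  have hβ' : (0 : ℝ) < β := Nat.cast_pos.2 hβ
  rw [ecfT, if_neg (ecfBranch_pos hβ hy).ne', floor_one_div_ecfBranch hy hβy, Int.cast_natCast,
    ecfBranch, one_div_one_div]
  field_simp; ring

def ecfCylinder (n : ℕ) (b : ℕ → ℕ) : Set ℝ :=
  {x ∈ Ioc (0 : ℝ) 1 | ∀ i, 1 ≤ i → i ≤ n → ecfB i x = (b i : ℤ)}

def ecfDigits (b : ℕ → ℕ) (n : ℕ) : List ℕ := (List.range n).map (fun i => b (i + 1))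

theorem ecfDigits_succ_eq_cons (b : ℕ → ℕ) (n : ℕ) :
    ecfDigits b (n + 1) = b 1 :: ecfDigits (fun i => b (i + 1)) n := by
  simp [ecfDigits, List.range_succ_eq_map, List.map_map, Function.comp_def]

theorem ecfDigits_succ (b : ℕ → ℕ) (n : ℕ) :
    ecfDigits b (n + 1) = ecfDigits b n ++ [b (n + 1)] := by
  simp [ecfDigits, List.range_succ]

theorem ecfCylinder_one {b : ℕ → ℕ} (hb : 1 ≤ b 1) :
    ecfCylinder 1 b = Ioc (1 / (b 1 + 1) : ℝ) (1 / b 1) := by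
  ext x
  have hdigit : (∀ i, 1 ≤ i → i ≤ 1 → ecfB i x = (b i : ℤ)) ↔ ⌊1 / x⌋ = b 1 :=
    ⟨fun h => h 1 le_rfl le_rfl, fun h i h₁ h₂ => (le_antisymm h₂ h₁) ▸ h⟩
  simp only [ecfCylinder, mem_sep_iff, hdigit]
  constructor
  · rintro ⟨hx, h⟩
    exact (floor_one_div_eq_iff hx.1 hb).1 h
  · intro hx
    have hx0 : 0 < x := lt_of_le_of_lt (by positivity) hx.1
    have h := (floor_one_div_eq_iff hx0 hb).2 hx
    exact ⟨mem_Ioc_of_one_le_floor_one_div (h ▸ by exact_mod_cast hb), h⟩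

theorem ecfCylinder_succ {n : ℕ} (hn : 1 ≤ n) {b : ℕ → ℕ} (hb1 : 1 ≤ b 1)
    (hb2 : 1 ≤ b 2) :
    ecfCylinder (n + 1) b =
      ecfBranch (b 1) '' {y ∈ ecfCylinder n (fun i => b (i + 1)) | b 1 * y < 1} := by
  ext x
  constructor
  · rintro ⟨hx, hdigits⟩
    have hfloor : ⌊1 / x⌋ = b 1 := hdigits 1 le_rfl (by omega)
    obtain ⟨hbranch, hlt⟩ := ecfBranch_ecfT hx.1 hb1 hfloor
    have hTdigits : ∀ i, 1 ≤ i → i ≤ n → ecfB i (ecfT x) = (b (i + 1) : ℤ) :=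
      fun i hi hin => ecfB_succ_s7 hi x ▸ hdigits (i + 1) (by omega) (by omega)
    have hT : ecfT x ∈ Ioc 0 1 :=
      mem_Ioc_of_one_le_floor_one_div
        (by rw [← ecfB_one, hTdigits 1 le_rfl hn]; exact_mod_cast hb2)
    exact ⟨ecfT x, ⟨⟨hT, hTdigits⟩, hlt⟩, hbranch⟩
  · rintro ⟨y, ⟨⟨hy, hydigits⟩, hlt⟩, rfl⟩
    have hfloor := floor_one_div_ecfBranch hy.1.le hlt
    have hT := ecfT_ecfBranch hb1 hy.1.le hlt
    refine ⟨mem_Ioc_of_one_le_floor_one_div (hfloor ▸ by exact_mod_cast hb1),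
      fun i hi hin => ?_⟩
    obtain rfl | hi := eq_or_lt_of_le hi
    · exact hfloor
    · obtain ⟨j, rfl⟩ : ∃ j, i = j + 1 := ⟨i - 1, by omega⟩
      rw [ecfB_succ_s7 (by omega), hT]
      exact hydigits j (by omega) (by omega)

theorem ecfVal_ecfDigits_succ (b : ℕ → ℕ) (n : ℕ) :
    ecfVal (ecfDigits b (n + 1)) = ecfBranch (b 1) (ecfVal (ecfDigits (fun i => b (i + 1)) n)) := by
  rw [ecfDigits_succ_eq_cons, ecfVal_cons]

theorem ecfVal_ecfDigits_bump_succ {n : ℕ} (hn : 1 ≤ n) (b : ℕ → ℕ) :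
    ecfVal (ecfDigits b n ++ [b (n + 1) + 1]) =
      ecfBranch (b 1) (ecfVal (ecfDigits (fun i => b (i + 1)) (n - 1) ++ [b (n + 1) + 1])) := by
  obtain ⟨m, rfl⟩ : ∃ m, n = m + 1 := ⟨n - 1, by omega⟩
  rw [ecfDigits_succ_eq_cons, List.cons_append, ecfVal_cons, Nat.add_sub_cancel]

theorem ecfVal_ecfDigits_le {n : ℕ} (hn : 1 ≤ n) {b : ℕ → ℕ} (hb : 1 ≤ b 1) :
    ecfVal (ecfDigits b n) ≤ 1 / b 1 := by
  obtain ⟨m, rfl⟩ : ∃ m, n = m + 1 := ⟨n - 1, by omega⟩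
  rw [ecfVal_ecfDigits_succ]
  exact ecfBranch_le hb (ecfVal_nonneg _)

theorem ecfVal_ecfDigits_bump_le {n : ℕ} (hn : 1 ≤ n) {b : ℕ → ℕ} (hb : 1 ≤ b 1) :
    ecfVal (ecfDigits b (n - 1) ++ [b n + 1]) ≤ 1 / b 1 := by
  obtain ⟨m, rfl⟩ : ∃ m, n = m + 1 := ⟨n - 1, by omega⟩
  cases m with
  | zero =>
    have : (0 : ℝ) < b 1 := by exact_mod_cast hb
    calc ecfVal [b 1 + 1] ≤ 1 / (b 1 + 1 : ℕ) := ecfBranch_le (Nat.succ_pos _) le_rfl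
      _ ≤ 1 / b 1 := by push_cast; gcongr; linarith
  | succ m =>
    rw [Nat.add_sub_cancel, ecfVal_ecfDigits_bump_succ (by omega)]
    exact ecfBranch_le hb (ecfVal_nonneg _)

theorem ecfCylinder_sandwich {n : ℕ} (hn : 1 ≤ n) {b : ℕ → ℕ} (hb : 1 ≤ b 1)
    (hmono : ∀ i, 1 ≤ i → i < n → b i ≤ b (i + 1)) :
    let u := ecfVal (ecfDigits b n)
    let v := ecfVal (ecfDigits b (n - 1) ++ [b n + 1])
    uIoo u v ⊆ ecfCylinder n b ∧ ecfCylinder n b ⊆ uIcc u v := by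
  induction n, hn using Nat.le_induction generalizing b with
  | base =>
    have hb' : (0 : ℝ) < b 1 := by exact_mod_cast hb
    have hle : (1 / (b 1 + 1) : ℝ) ≤ 1 / b 1 := by gcongr; linarith
    simp only [ecfDigits, List.range_one, List.map_cons, List.map_nil, List.range_zero,
      List.nil_append, ecfVal_cons, ecfVal, ecfBranch, Nat.sub_self, zero_add, mul_zero, add_zero]
    rw [ecfCylinder_one hb, uIoo_of_ge (by push_cast; exact hle),
      uIcc_of_ge (by push_cast; exact hle)]
    push_cast
    exact ⟨Ioo_subset_Ioc_self, Ioc_subset_Icc_self⟩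
  | succ n hn ih =>
    intro u v
    have hb' : (0 : ℝ) < b 1 := by exact_mod_cast hb
    have hb2 : 1 ≤ b 2 := hb.trans (hmono 1 le_rfl (by omega))
    obtain ⟨ih₁, ih₂⟩ := ih hb2 (fun i hi hin => hmono (i + 1) (by omega) (by omega))
    have hb12 : (1 / b 2 : ℝ) ≤ 1 / b 1 := by gcongr; exact_mod_cast hmono 1 le_rfl (by omega)
    have hmax := max_le ((ecfVal_ecfDigits_le hn (b := fun i => b (i + 1)) hb2).trans hb12)
      ((ecfVal_ecfDigits_bump_le hn (b := fun i => b (i + 1)) hb2).trans hb12)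
    simp only [u, v, ecfCylinder_succ hn hb hb2, Nat.add_sub_cancel, ecfVal_ecfDigits_succ,
      ecfVal_ecfDigits_bump_succ hn]
    constructor
    · refine (uIoo_ecfBranch_subset_image hb (ecfVal_nonneg _) (ecfVal_nonneg _)).trans
        (image_mono fun y hy => ⟨ih₁ hy, ?_⟩)
      calc (b 1 : ℝ) * y < b 1 * (1 / b 1) := by gcongr; exact hy.2.trans_le hmax
        _ = 1 := by field_simp
    · refine (image_mono ((sep_subset _ _).trans ih₂)).trans ?_
      exact ((strictAntiOn_ecfBranch hb).antitoneOn.mono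
        ((ordConnected_Ici).uIcc_subset (ecfVal_nonneg _) (ecfVal_nonneg _))).image_uIcc_subset

def ecfMatrix (c : ℕ) : Matrix (Fin 2) (Fin 2) ℝ := !![0, 1; c, c]

theorem det_prod_ecfMatrix (l : List ℕ) :
    (l.map ecfMatrix).prod.det = (-1) ^ l.length * (l.prod : ℝ) := by
  induction l with
  | nil => simp
  | cons c l ih =>
    rw [List.map_cons, List.prod_cons, Matrix.det_mul, ih, ecfMatrix, Matrix.det_fin_two_of,
      List.length_cons, List.prod_cons, Nat.cast_mul, pow_succ]
    ring

theorem prod_ecfMatrix_nonneg (l : List ℕ) (i j : Fin 2) : 0 ≤ (l.map ecfMatrix).prod i j := by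
  induction l generalizing i with
  | nil => rw [List.map_nil, List.prod_nil, Matrix.one_apply]; split_ifs <;> norm_num
  | cons c l ih =>
    rw [List.map_cons, List.prod_cons, Matrix.mul_apply, Fin.sum_univ_two]
    have h₀ := ih 0; have h₁ := ih 1
    fin_cases i <;>
      simp only [ecfMatrix, Fin.zero_eta, Fin.mk_one, Fin.isValue, Matrix.of_apply,
        Matrix.cons_val', Matrix.cons_val_zero, Matrix.cons_val_fin_one, Matrix.cons_val_one,
        zero_mul, one_mul, zero_add] <;>
      positivity

theorem foldr_ecfBranch_eq (l : List ℕ) (hl : ∀ c ∈ l, 1 ≤ c) {s : ℝ} (hs : 0 ≤ s) :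
    let M := (l.map ecfMatrix).prod
    0 < M 1 0 * s + M 1 1 ∧ l.foldr ecfBranch s = (M 0 0 * s + M 0 1) / (M 1 0 * s + M 1 1) := by
  induction l with
  | nil => simp
  | cons c l ih =>
    intro M
    obtain ⟨hden, hval⟩ := ih fun d hd => hl d (List.mem_cons_of_mem c hd)
    have hc : (1 : ℝ) ≤ c := by exact_mod_cast hl c List.mem_cons_self
    have hnum : 0 ≤ (l.map ecfMatrix).prod 0 0 * s + (l.map ecfMatrix).prod 0 1 := by
      have := prod_ecfMatrix_nonneg l 0 0; have := prod_ecfMatrix_nonneg l 0 1; positivity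
    simp only [M, List.map_cons, List.prod_cons, Matrix.mul_apply, Fin.sum_univ_two, ecfMatrix,
      Matrix.of_apply, Matrix.cons_val', Matrix.cons_val_zero, Matrix.cons_val_one,
      Matrix.empty_val', Matrix.cons_val_fin_one, List.foldr_cons, hval, ecfBranch]
    generalize (l.map ecfMatrix).prod 0 0 = A, (l.map ecfMatrix).prod 0 1 = B,
      (l.map ecfMatrix).prod 1 0 = C, (l.map ecfMatrix).prod 1 1 = D at hden hnum
    refine ⟨by nlinarith, ?_⟩
    have : (c : ℝ) + c * ((A * s + B) / (C * s + D)) =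
        c * (A * s + B + (C * s + D)) / (C * s + D) := by
      rw [eq_div_iff hden.ne', add_mul, mul_assoc, div_mul_cancel₀ _ hden.ne']; ring
    rw [this, one_div_div]
    congr 1 <;> ring

theorem foldr_ecfBranch_sub (l : List ℕ) (hl : ∀ c ∈ l, 1 ≤ c) {s s' : ℝ} (hs : 0 ≤ s)
    (hs' : 0 ≤ s') :
    let M := (l.map ecfMatrix).prod
    l.foldr ecfBranch s - l.foldr ecfBranch s' =
      M.det * (s - s') / ((M 1 0 * s + M 1 1) * (M 1 0 * s' + M 1 1)) := by
  intro M
  obtain ⟨hd, hval⟩ := foldr_ecfBranch_eq l hl hs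
  obtain ⟨hd', hval'⟩ := foldr_ecfBranch_eq l hl hs'
  rw [hval, hval', Matrix.det_fin_two, div_sub_div _ _ hd.ne' hd'.ne']
  congr 1; ring

theorem prod_ecfMatrix_append_singleton (l : List ℕ) (d : ℕ) :
    ((l ++ [d]).map ecfMatrix).prod 1 0 = (l.map ecfMatrix).prod 1 1 * d ∧
      ((l ++ [d]).map ecfMatrix).prod 1 1 =
        (l.map ecfMatrix).prod 1 0 + (l.map ecfMatrix).prod 1 1 * d := by
  simp [Matrix.mul_apply, Fin.sum_univ_two, ecfMatrix]

theorem prod_ecfMatrix_ecfDigits (b : ℕ → ℕ) :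
    ∀ m, ((ecfDigits b m).map ecfMatrix).prod 1 1 = ecfQ b m
  | 0 => by simp [ecfDigits, ecfQ]
  | 1 => by simp [ecfDigits, ecfQ, ecfMatrix]
  | m + 2 => by
    rw [ecfDigits_succ, (prod_ecfMatrix_append_singleton _ _).2, ecfDigits_succ,
      (prod_ecfMatrix_append_singleton _ _).1, prod_ecfMatrix_ecfDigits b m,
      ← ecfDigits_succ, prod_ecfMatrix_ecfDigits b (m + 1), ecfQ]
    push_cast; ring

theorem ecfQ_nonneg (b : ℕ → ℕ) (m : ℕ) : 0 ≤ ecfQ b m := by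
  have := prod_ecfMatrix_ecfDigits b m ▸ prod_ecfMatrix_nonneg (ecfDigits b m) 1 1
  exact_mod_cast this

theorem prod_ecfDigits (b : ℕ → ℕ) (m : ℕ) :
    (ecfDigits b m).prod = ∏ i ∈ Finset.Icc 1 m, b i := by
  induction m with
  | zero => rfl
  | succ m ih =>
    rw [ecfDigits_succ, List.prod_append, ih, Finset.prod_Icc_succ_top (by omega),
      List.prod_singleton]

theorem ecfVal_sub_ecfVal_bump {n : ℕ} (hn : 1 ≤ n) {b : ℕ → ℕ}
    (hpos : ∀ i, 1 ≤ i → i ≤ n → 1 ≤ b i) :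
    ecfVal (ecfDigits b n) - ecfVal (ecfDigits b (n - 1) ++ [b n + 1]) =
      (-1) ^ (n - 1) * (∏ i ∈ Finset.Icc 1 (n - 1), (b i : ℝ)) /
        ((ecfQ b n : ℝ) * ((ecfQ b n : ℝ) + (ecfQ b (n - 1) : ℝ))) := by
  obtain ⟨m, rfl⟩ : ∃ m, n = m + 1 := ⟨n - 1, by omega⟩
  rw [Nat.add_sub_cancel, ecfDigits_succ, ecfVal_append, ecfVal_append]
  set l := ecfDigits b m
  have hl : ∀ c ∈ l, 1 ≤ c := by
    simp only [l, ecfDigits, List.mem_map, List.mem_range]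
    rintro _ ⟨i, hi, rfl⟩
    exact hpos (i + 1) (by omega) (by omega)
  have ht : (0 : ℝ) < b (m + 1) := by exact_mod_cast hpos (m + 1) (by omega) le_rfl
  have hval : ∀ d : ℕ, ecfVal [d] = 1 / d := fun d => by simp [ecfVal]
  rw [hval, hval, foldr_ecfBranch_sub l hl (by positivity) (by positivity), det_prod_ecfMatrix]
  have hQ : ecfQ b m = (l.map ecfMatrix).prod 1 1 := (prod_ecfMatrix_ecfDigits b m).symm
  have hQ' : ecfQ b (m + 1) =
      (l.map ecfMatrix).prod 1 0 + (l.map ecfMatrix).prod 1 1 * b (m + 1) := by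
    rw [← prod_ecfMatrix_ecfDigits, ecfDigits_succ, (prod_ecfMatrix_append_singleton _ _).2]
  have hlen : l.length = m := by simp [l, ecfDigits]
  have hprod : (l.prod : ℝ) = ∏ i ∈ Finset.Icc 1 m, (b i : ℝ) := by
    rw [prod_ecfDigits]; push_cast; rfl
  have hd := (foldr_ecfBranch_eq l hl (s := 1 / b (m + 1)) (by positivity)).1
  have hd' := (foldr_ecfBranch_eq l hl (s := 1 / (b (m + 1) + 1)) (by positivity)).1
  rw [hQ, hQ', hlen, hprod]
  push_cast
  generalize (l.map ecfMatrix).prod 1 0 = C, (l.map ecfMatrix).prod 1 1 = D, (b (m + 1) : ℝ) = t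
    at hd hd' ht
  field_simp
  ring

theorem abs_ecfVal_sub_ecfVal_bump {n : ℕ} (hn : 1 ≤ n) {b : ℕ → ℕ}
    (hpos : ∀ i, 1 ≤ i → i ≤ n → 1 ≤ b i) :
    |ecfVal (ecfDigits b n) - ecfVal (ecfDigits b (n - 1) ++ [b n + 1])| =
      (∏ i ∈ Finset.Icc 1 (n - 1), (b i : ℝ)) /
        ((ecfQ b n : ℝ) * ((ecfQ b n : ℝ) + (ecfQ b (n - 1) : ℝ))) := by
  have hQ : (0 : ℝ) ≤ ecfQ b n := by exact_mod_cast ecfQ_nonneg b n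
  have hQ' : (0 : ℝ) ≤ ecfQ b (n - 1) := by exact_mod_cast ecfQ_nonneg b (n - 1)
  rw [ecfVal_sub_ecfVal_bump hn hpos, abs_div, abs_mul, abs_pow, abs_neg, abs_one, one_pow,
    one_mul, abs_of_nonneg (by positivity), abs_of_nonneg (by positivity)]

/-- Structure and length of cylinders: for an admissible `(b_1, …, b_n)`, the cylinder
`B(b_1,…,b_n)` is an interval with endpoints `[[b_1,…,b_n]]` and `[[b_1,…,b_{n-1},b_n+1]]`,
and its Lebesgue measure is `(∏_{i=1}^{n-1} b_i)/(Q_n (Q_n + Q_{n-1}))`. -/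
theorem ecf_cylinder_structure (n : ℕ) (hn : 1 ≤ n) (b : ℕ → ℕ)
    (hpos : ∀ i, 1 ≤ i → i ≤ n → 1 ≤ b i)
    (hmono : ∀ i, 1 ≤ i → i < n → b i ≤ b (i + 1)) :
    let B : Set ℝ := {x ∈ Set.Ioc (0 : ℝ) 1 | ∀ i, 1 ≤ i → i ≤ n → ecfB i x = (b i : ℤ)}
    let u : ℝ := ecfVal ((List.range n).map (fun i => b (i + 1)))
    let v : ℝ := ecfVal ((List.range (n - 1)).map (fun i => b (i + 1)) ++ [b n + 1])
    Set.Ioo (min u v) (max u v) ⊆ B ∧ B ⊆ Set.Icc (min u v) (max u v) ∧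
    volume B = ENNReal.ofReal
      ((∏ i ∈ Finset.Icc 1 (n - 1), (b i : ℝ)) /
        ((ecfQ b n : ℝ) * ((ecfQ b n : ℝ) + (ecfQ b (n - 1) : ℝ)))) := by
  intro B u v
  obtain ⟨hIoo, hIcc⟩ := ecfCylinder_sandwich hn (hpos 1 le_rfl hn) hmono
  refine ⟨hIoo, hIcc, (Real.volume_eq_of_uIoo_subset_of_subset_uIcc hIoo hIcc).trans ?_⟩
  rw [abs_sub_comm, abs_ecfVal_sub_ecfVal_bump hn hpos]
end

section
/- Let θ < 1 be a real number. Then for every integer j > 1: (i) ∑_{k=j}^{∞} (j/(k(k+2)))·(k/j)^θ ≥ (j/(j+2))·(1/(1−θ)), and (ii) ∑_{k=j}^{∞} ((j+1)/(k(k+1)))·(k/j)^θ ≤ (1 + 1/j)·(1 − 1/j)^{θ−1}·(1/(1−θ)). -/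
/-!
For `p = θ - 1 < 0` the function `x ↦ x ^ p` is convex, so it lies above its tangent lines
(Bernoulli's inequality with a nonpositive exponent). Hence `(1 - θ) k ^ (θ - 2)` is squeezed
between the consecutive differences `k ^ (θ - 1) - (k + 1) ^ (θ - 1)` and
`(k - 1) ^ (θ - 1) - k ^ (θ - 1)`. Writing `j / (k m) (k / j) ^ θ = (k / j) ^ (θ - 1) / m`, each
series is compared termwise with a telescoping series in `(k / j) ^ (θ - 1)`, whose sums are `1`
and `(1 - 1 / j) ^ (θ - 1)`; the factors `j / (j + 2) ≤ k / (k + 2)` and `k / (k + 1) ≤ 1`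
account for the remaining constants.
-/

open Real Filter Topology

theorem Antitone.hasSum_sub_succ {h : ℕ → ℝ} (hmono : Antitone h)
    (hlim : Tendsto h atTop (𝓝 0)) : HasSum (fun i ↦ h i - h (i + 1)) (h 0) := by
  rw [hasSum_iff_tendsto_nat_of_nonneg fun i ↦ sub_nonneg.2 (hmono i.le_succ)]
  simp_rw [Finset.sum_range_sub']
  simpa using tendsto_const_nhds.sub hlim

namespace Real

theorem one_add_mul_self_le_rpow_one_add_of_nonpos {s p : ℝ} (hs : -1 < s) (hp : p ≤ 0) :
    1 + p * s ≤ (1 + s) ^ p := by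
  have hpos : 0 < 1 + s := by linarith
  calc 1 + p * s ≤ 1 + p * log (1 + s) := by
        nlinarith [log_le_sub_one_of_pos hpos]
    _ ≤ exp (log (1 + s) * p) := by linarith [add_one_le_exp (log (1 + s) * p)]
    _ = (1 + s) ^ p := (rpow_def_of_pos hpos p).symm

theorem div_rpow_mul_one_add_le_add_div_rpow {k d c p : ℝ} (hk : 0 < k) (hkd : 0 < k + d)
    (hc : 0 ≤ c) (hp : p ≤ 0) : (k / c) ^ p * (1 + p * (d / k)) ≤ ((k + d) / c) ^ p := by
  have hdk : -1 < d / k := by rw [lt_div_iff₀ hk]; linarith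
  have hsplit : (k + d) / c = k / c * (1 + d / k) := by field_simp
  rw [hsplit, mul_rpow (by positivity) (by linarith)]
  exact mul_le_mul_of_nonneg_left (one_add_mul_self_le_rpow_one_add_of_nonpos hdk hp)
    (by positivity)

theorem div_rpow_sub_add_one_div_rpow_le {k c p : ℝ} (hk : 0 < k) (hc : 0 ≤ c) (hp : p ≤ 0) :
    (k / c) ^ p - ((k + 1) / c) ^ p ≤ -p * ((k / c) ^ p / k) := by
  have := div_rpow_mul_one_add_le_add_div_rpow hk (by linarith) hc hp (d := 1)
  linarith [show (k / c) ^ p * (1 + p * (1 / k)) = (k / c) ^ p + p * ((k / c) ^ p / k) by ring]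

theorem neg_mul_div_rpow_div_le_sub_one_div_rpow_sub {k c p : ℝ} (hk : 1 < k) (hc : 0 ≤ c)
    (hp : p ≤ 0) : -p * ((k / c) ^ p / k) ≤ ((k - 1) / c) ^ p - (k / c) ^ p := by
  have := div_rpow_mul_one_add_le_add_div_rpow (k := k) (d := -1) (by linarith) (by linarith)
    hc hp
  rw [← sub_eq_add_neg] at this
  linarith [show (k / c) ^ p * (1 + p * (-1 / k)) = (k / c) ^ p - p * ((k / c) ^ p / k) by ring]

theorem hasSum_add_div_rpow_sub_add_one_div_rpow {a c p : ℝ} (ha : 0 < a) (hc : 0 < c)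
    (hp : p < 0) :
    HasSum (fun i : ℕ ↦ ((a + i) / c) ^ p - ((a + i + 1) / c) ^ p) ((a / c) ^ p) := by
  have hmono : Antitone fun i : ℕ ↦ ((a + i) / c) ^ p := fun m n hmn ↦ by
    refine rpow_le_rpow_of_nonpos (by positivity) ?_ hp.le
    gcongr
  have hlim : Tendsto (fun i : ℕ ↦ ((a + i) / c) ^ p) atTop (𝓝 0) := by
    have := tendsto_rpow_neg_atTop (neg_pos.2 hp)
    rw [neg_neg] at this
    refine this.comp (Tendsto.atTop_div_const hc ?_)
    exact tendsto_atTop_add_const_left _ a tendsto_natCast_atTop_atTop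
  simpa [add_assoc] using hmono.hasSum_sub_succ hlim

theorem summable_add_div_rpow_div_add {a c p : ℝ} (ha : 0 < a) (hc : 0 < c) (hp : p < 0) :
    Summable fun i : ℕ ↦ ((a + i) / c) ^ p / (a + i) := by
  have hpseries := (summable_one_div_nat_add_rpow a (1 - p)).2 (by linarith)
  refine (hpseries.mul_left (c ^ (-p))).congr fun i ↦ ?_
  have hx : 0 < a + i := by positivity
  rw [add_comm (i : ℝ), abs_of_pos hx, div_rpow (by positivity) hc.le, rpow_neg hc.le,
    rpow_sub hx, rpow_one]
  field_simp

theorem div_mul_mul_div_rpow {J k m θ : ℝ} (hJ : 0 < J) (hk : 0 < k) :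
    J / (k * m) * (k / J) ^ θ = (k / J) ^ (θ - 1) / m := by
  rw [rpow_sub_one (by positivity)]
  field_simp

theorem div_add_two_div_mul_sub_div_rpow_le {θ J k : ℝ} (hθ : θ < 1) (hJ : 0 < J)
    (hJk : J ≤ k) :
    J / (J + 2) / (1 - θ) * ((k / J) ^ (θ - 1) - ((k + 1) / J) ^ (θ - 1)) ≤
      J / (k * (k + 2)) * (k / J) ^ θ := by
  have hk : 0 < k := hJ.trans_le hJk
  have hθ' : 0 < 1 - θ := by linarith
  have htangent := div_rpow_sub_add_one_div_rpow_le hk hJ.le (p := θ - 1) (by linarith)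
  rw [neg_sub] at htangent
  have hratio : J / (J + 2) / k ≤ 1 / (k + 2) := by
    rw [div_div, div_le_div_iff₀ (by positivity) (by positivity)]
    nlinarith
  calc J / (J + 2) / (1 - θ) * ((k / J) ^ (θ - 1) - ((k + 1) / J) ^ (θ - 1))
      ≤ J / (J + 2) / (1 - θ) * ((1 - θ) * ((k / J) ^ (θ - 1) / k)) := by gcongr
    _ = (k / J) ^ (θ - 1) * (J / (J + 2) / k) := by field_simp
    _ ≤ (k / J) ^ (θ - 1) * (1 / (k + 2)) := by gcongr
    _ = J / (k * (k + 2)) * (k / J) ^ θ := by rw [div_mul_mul_div_rpow hJ hk]; ring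

theorem add_one_div_mul_add_one_mul_div_rpow_le {θ J k : ℝ} (hθ : θ < 1) (hJ : 0 < J)
    (hk : 1 < k) :
    (J + 1) / (k * (k + 1)) * (k / J) ^ θ ≤
      (1 + 1 / J) / (1 - θ) * (((k - 1) / J) ^ (θ - 1) - (k / J) ^ (θ - 1)) := by
  have hθ' : 0 < 1 - θ := by linarith
  have htangent :=
    neg_mul_div_rpow_div_le_sub_one_div_rpow_sub hk hJ.le (p := θ - 1) (by linarith)
  rw [neg_sub] at htangent
  calc (J + 1) / (k * (k + 1)) * (k / J) ^ θ
      = (1 + 1 / J) * (J / (k * (k + 1)) * (k / J) ^ θ) := by field_simp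
    _ = (1 + 1 / J) * ((k / J) ^ (θ - 1) / (k + 1)) := by
      rw [div_mul_mul_div_rpow hJ (by linarith)]
    _ ≤ (1 + 1 / J) * ((k / J) ^ (θ - 1) / k) := by gcongr; linarith
    _ = (1 + 1 / J) / (1 - θ) * ((1 - θ) * ((k / J) ^ (θ - 1) / k)) := by field_simp
    _ ≤ (1 + 1 / J) / (1 - θ) * (((k - 1) / J) ^ (θ - 1) - (k / J) ^ (θ - 1)) := by gcongr

theorem le_tsum_div_mul_add_two_mul_div_rpow {θ J : ℝ} (hθ : θ < 1) (hJ : 0 < J) :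
    J / (J + 2) * (1 / (1 - θ)) ≤
      ∑' i : ℕ, J / ((J + i) * (J + i + 2)) * ((J + i) / J) ^ θ := by
  have htelescope := (hasSum_add_div_rpow_sub_add_one_div_rpow hJ hJ (p := θ - 1)
    (by linarith)).mul_left (J / (J + 2) / (1 - θ))
  have hsummable : Summable fun i : ℕ ↦ J / ((J + i) * (J + i + 2)) * ((J + i) / J) ^ θ := by
    refine (summable_add_div_rpow_div_add hJ hJ (p := θ - 1) (by linarith)).of_nonneg_of_le
      (fun i ↦ by positivity) fun i ↦ ?_
    rw [div_mul_mul_div_rpow hJ (by positivity)]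
    exact div_le_div_of_nonneg_left (by positivity) (by positivity) (by linarith)
  calc J / (J + 2) * (1 / (1 - θ)) = J / (J + 2) / (1 - θ) * (J / J) ^ (θ - 1) := by
        rw [div_self hJ.ne', one_rpow]; ring
    _ ≤ _ := hasSum_le (fun i ↦ div_add_two_div_mul_sub_div_rpow_le hθ hJ (by simp))
        htelescope hsummable.hasSum

theorem tsum_add_one_div_mul_add_one_mul_div_rpow_le {θ J : ℝ} (hθ : θ < 1) (hJ : 1 < J) :
    ∑' i : ℕ, (J + 1) / ((J + i) * (J + i + 1)) * ((J + i) / J) ^ θ ≤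
      (1 + 1 / J) * (1 - 1 / J) ^ (θ - 1) * (1 / (1 - θ)) := by
  have htelescope : HasSum (fun i : ℕ ↦ (1 + 1 / J) / (1 - θ) *
        (((J + i - 1) / J) ^ (θ - 1) - ((J + i) / J) ^ (θ - 1)))
      ((1 + 1 / J) / (1 - θ) * ((J - 1) / J) ^ (θ - 1)) := by
    have := (hasSum_add_div_rpow_sub_add_one_div_rpow (sub_pos.2 hJ) (by linarith) (p := θ - 1)
      (by linarith)).mul_left ((1 + 1 / J) / (1 - θ))
    simpa only [sub_add_eq_add_sub, add_sub_cancel_right] using this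
  have hbound (i : ℕ) := add_one_div_mul_add_one_mul_div_rpow_le hθ (by linarith)
    (k := J + i) (by linarith [i.cast_nonneg (α := ℝ)])
  calc _ ≤ (1 + 1 / J) / (1 - θ) * ((J - 1) / J) ^ (θ - 1) :=
        hasSum_le hbound
          (htelescope.summable.of_nonneg_of_le (fun i ↦ by positivity) hbound).hasSum htelescope
    _ = (1 + 1 / J) * (1 - 1 / J) ^ (θ - 1) * (1 / (1 - θ)) := by
      rw [one_sub_div (by linarith)]; ring

end Real

/-- Series estimates: for `θ < 1` and an integer `j > 1`,
`∑_{k ≥ j} (j/(k(k+2)))(k/j)^θ ≥ (j/(j+2))·1/(1-θ)` and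
`∑_{k ≥ j} ((j+1)/(k(k+1)))(k/j)^θ ≤ (1+1/j)(1-1/j)^{θ-1}·1/(1-θ)`
(the sums over `k ≥ j` are written via the shift `k = j + i`). -/
theorem ecf_series_estimates (θ : ℝ) (hθ : θ < 1) (j : ℕ) (hj : 1 < j) :
    ((j : ℝ) / (j + 2)) * (1 / (1 - θ)) ≤
      (∑' i : ℕ, (j : ℝ) / (((j : ℝ) + i) * ((j : ℝ) + i + 2)) *
        (((j : ℝ) + i) / j) ^ θ) ∧
    (∑' i : ℕ, ((j : ℝ) + 1) / (((j : ℝ) + i) * ((j : ℝ) + i + 1)) *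
        (((j : ℝ) + i) / j) ^ θ) ≤
      (1 + 1 / (j : ℝ)) * (1 - 1 / (j : ℝ)) ^ (θ - 1) * (1 / (1 - θ)) := by
  have hj' : (1 : ℝ) < j := Nat.one_lt_cast.2 hj
  exact ⟨Real.le_tsum_div_mul_add_two_mul_div_rpow hθ (by linarith),
    Real.tsum_add_one_div_mul_add_one_mul_div_rpow_le hθ hj'⟩
end

section
/- Legendre transform computation for the ECF pressure function: define φ = (√5+1)/2 and Λ: ℝ → (−∞, +∞] by Λ(θ) = −θ − 2·log φ for θ ≤ −φ, Λ(θ) = −θ − log(1−θ) for −φ < θ < 1, and Λ(θ) = +∞ for θ ≥ 1. Then for every x ∈ ℝ, sup_{θ ∈ ℝ} (θx − Λ(θ)) = I(x), where I(x) = x − log(x+1) if x > −(√5−1)/2; I(x) = −φ·(x+1) + 2·log φ if −1 ≤ x ≤ −(√5−1)/2; and I(x) = +∞ if x < −1 (the supremum and equality being taken in the extended reals, with θx − Λ(θ) = −∞ when Λ(θ) = +∞). -/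
/-- The golden ratio `φ = (√5 + 1)/2`. -/
noncomputable def ecfPhi : ℝ := (Real.sqrt 5 + 1) / 2

/-- The pressure function `Λ` of the ECF large deviation principle. -/
noncomputable def ecfLambda (θ : ℝ) : EReal :=
  if 1 ≤ θ then ⊤
  else if θ ≤ -ecfPhi then ((-θ - 2 * Real.log ecfPhi : ℝ) : EReal)
  else ((-θ - Real.log (1 - θ) : ℝ) : EReal)

/-- The rate function of the LDP for Engel continued fractions. -/
noncomputable def rateI (x : ℝ) : EReal :=
  if x < -1 then ⊤
  else if x ≤ -(Real.sqrt 5 - 1) / 2 then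
    ((-(Real.sqrt 5 + 1) / 2 * (x + 1) + 2 * Real.log ((Real.sqrt 5 + 1) / 2) : ℝ) : EReal)
  else ((x - Real.log (x + 1) : ℝ) : EReal)

/-!
For `θ < 1` the two finite branches of `Λ` merge, because `log (1 + φ) = 2 log φ`:
`θ x - Λ(θ) = θ (x + 1) + log (1 - max θ (-φ))`. If `x < -1` this tends to `+∞` as `θ → -∞`.
If `x ≥ -1`, replacing `θ` by `max θ (-φ)` does not decrease it, so the supremum is that of the
concave function `θ (x + 1) + log (1 - θ)` over `[-φ, 1)`. Its critical point `1 - (x + 1)⁻¹`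
lies in that interval exactly when `x > ψ = -(√5 - 1)/2`; otherwise the maximum sits at `-φ`.
Both upper bounds are tangent-line estimates for `log`.
-/

open Real goldenRatio Filter

lemma ecfPhi_eq_goldenRatio : ecfPhi = φ := by
  rw [ecfPhi, goldenRatio, add_comm]

lemma log_one_add_goldenRatio : log (1 + φ) = 2 * log φ := by
  rw [add_comm, ← goldenRatio_sq, log_pow, Nat.cast_ofNat]

lemma Real.log_le_log_add_sub_div {c y : ℝ} (hc : 0 < c) (hy : 0 < y) :
    log y ≤ log c + (y - c) / c := by
  have h := log_le_sub_one_of_pos (div_pos hy hc)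
  rw [log_div hy.ne' hc.ne', div_sub_one hc.ne'] at h
  linarith

lemma mul_add_log_one_sub_le {a θ : ℝ} (ha : 0 < a) (hθ : θ < 1) :
    θ * a + log (1 - θ) ≤ a - 1 - log a := by
  have h := log_le_sub_one_of_pos (mul_pos (sub_pos.2 hθ) ha)
  rw [log_mul (sub_pos.2 hθ).ne' ha.ne'] at h
  linarith

lemma mul_add_log_one_sub_one_sub_inv {a : ℝ} (ha : 0 < a) :
    (1 - a⁻¹) * a + log (1 - (1 - a⁻¹)) = a - 1 - log a := by
  rw [sub_sub_cancel, log_inv, sub_mul, inv_mul_cancel₀ ha.ne', one_mul]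
  ring

lemma mul_add_log_one_sub_le_of_le {a θ₀ θ : ℝ} (hθ₀ : θ₀ < 1)
    (haθ₀ : a * (1 - θ₀) ≤ 1) (hθ : θ₀ ≤ θ) (hθ1 : θ < 1) :
    θ * a + log (1 - θ) ≤ θ₀ * a + log (1 - θ₀) := by
  have hlog := log_le_log_add_sub_div (sub_pos.2 hθ₀) (sub_pos.2 hθ1)
  have hslope : (θ - θ₀) * a ≤ (θ - θ₀) / (1 - θ₀) := by
    rw [le_div_iff₀ (sub_pos.2 hθ₀), mul_assoc]
    exact mul_le_of_le_one_right (sub_nonneg.2 hθ) haθ₀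
  have : (1 - θ - (1 - θ₀)) / (1 - θ₀) = -((θ - θ₀) / (1 - θ₀)) := by ring
  linarith

noncomputable def ecfLegendreObj (x θ : ℝ) : ℝ := θ * (x + 1) + log (1 - max θ (-φ))

lemma coe_mul_sub_ecfLambda (x : ℝ) {θ : ℝ} (hθ : θ < 1) :
    ((θ * x : ℝ) : EReal) - ecfLambda θ = ecfLegendreObj x θ := by
  rw [ecfLambda, if_neg hθ.not_ge, ecfPhi_eq_goldenRatio, ecfLegendreObj]
  split_ifs with hθφ
  · rw [max_eq_right hθφ, sub_neg_eq_add, log_one_add_goldenRatio, ← EReal.coe_sub]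
    ring_nf
  · rw [max_eq_left (not_le.1 hθφ).le, ← EReal.coe_sub]
    ring_nf

lemma ecfLegendreObj_le_max (x θ : ℝ) (hx : -1 ≤ x) :
    ecfLegendreObj x θ ≤ max θ (-φ) * (x + 1) + log (1 - max θ (-φ)) := by
  unfold ecfLegendreObj
  gcongr
  · linarith
  · exact le_max_left _ _

lemma iSup_coe_mul_sub_ecfLambda_eq {x M θ₀ : ℝ} (hθ₀ : θ₀ < 1) (hM : ecfLegendreObj x θ₀ = M)
    (hle : ∀ θ < 1, ecfLegendreObj x θ ≤ M) :
    ⨆ θ : ℝ, ((θ * x : ℝ) : EReal) - ecfLambda θ = M := by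
  refine le_antisymm (iSup_le fun θ => ?_) (le_iSup_of_le θ₀ ?_)
  · rcases lt_or_ge θ 1 with hθ | hθ
    · rw [coe_mul_sub_ecfLambda x hθ]
      exact EReal.coe_le_coe_iff.2 (hle θ hθ)
    · rw [ecfLambda, if_pos hθ, EReal.sub_top]
      exact bot_le
  · rw [coe_mul_sub_ecfLambda x hθ₀, hM]

lemma iSup_coe_mul_sub_ecfLambda_of_lt_neg_one {x : ℝ} (hx : x < -1) :
    ⨆ θ : ℝ, ((θ * x : ℝ) : EReal) - ecfLambda θ = ⊤ := by
  have hlin : Tendsto (fun θ => θ * (x + 1) + log (1 + φ)) atBot atTop :=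
    tendsto_atTop_add_const_right _ _ (tendsto_id.atBot_mul_const_of_neg (by linarith))
  have hobj : Tendsto (ecfLegendreObj x) atBot atTop := by
    refine hlin.congr' ((eventually_le_atBot (-φ)).mono fun θ hθ => ?_)
    rw [ecfLegendreObj, max_eq_right hθ, sub_neg_eq_add]
  rw [EReal.eq_top_iff_forall_lt]
  intro r
  obtain ⟨θ, hθr, hθ1⟩ := ((hobj.eventually_gt_atTop r).and (eventually_lt_atBot 1)).exists
  exact lt_iSup_iff.2 ⟨θ, by rw [coe_mul_sub_ecfLambda x hθ1]; exact_mod_cast hθr⟩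

lemma iSup_coe_mul_sub_ecfLambda_of_le_goldenConj {x : ℝ} (hx : -1 ≤ x) (hxψ : x ≤ ψ) :
    ⨆ θ : ℝ, ((θ * x : ℝ) : EReal) - ecfLambda θ = (-φ * (x + 1) + log (1 + φ) : ℝ) := by
  have hφ : -φ < 1 := by linarith [goldenRatio_pos]
  have hslope : (x + 1) * (1 - -φ) ≤ 1 := by
    nlinarith [goldenRatio_sq, one_sub_goldenConj]
  refine iSup_coe_mul_sub_ecfLambda_eq hφ ?_ fun θ hθ => ?_
  · rw [ecfLegendreObj, max_self, sub_neg_eq_add]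
  · rw [← sub_neg_eq_add 1 φ]
    exact (ecfLegendreObj_le_max x θ hx).trans <| mul_add_log_one_sub_le_of_le hφ hslope
      (le_max_right _ _) (max_lt hθ hφ)

lemma iSup_coe_mul_sub_ecfLambda_of_goldenConj_lt {x : ℝ} (hxψ : ψ < x) :
    ⨆ θ : ℝ, ((θ * x : ℝ) : EReal) - ecfLambda θ = (x - log (x + 1) : ℝ) := by
  have hx : 0 < x + 1 := by linarith [neg_one_lt_goldenConj]
  have hθ₀ : 1 - (x + 1)⁻¹ < 1 := by simpa using hx
  have hθ₀φ : -φ ≤ 1 - (x + 1)⁻¹ := by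
    rw [neg_le_sub_iff_le_add, inv_le_iff_one_le_mul₀ hx]
    nlinarith [goldenRatio_sq, one_sub_goldenConj]
  have hval : x - log (x + 1) = x + 1 - 1 - log (x + 1) := by ring
  refine iSup_coe_mul_sub_ecfLambda_eq hθ₀ ?_ fun θ hθ => ?_
  · rw [ecfLegendreObj, max_eq_left hθ₀φ, mul_add_log_one_sub_one_sub_inv hx, hval]
  · rw [hval]
    exact (ecfLegendreObj_le_max x θ (by linarith)).trans <|
      mul_add_log_one_sub_le hx (max_lt hθ (by linarith [goldenRatio_pos]))

/-- Legendre transform computation: `sup_θ (θx - Λ(θ)) = I(x)` for every real `x`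
(with `θx - Λ(θ) = -∞` when `Λ(θ) = +∞`). -/
theorem ecf_legendre_transform (x : ℝ) :
    (⨆ θ : ℝ, ((θ * x : ℝ) : EReal) - ecfLambda θ) = rateI x := by
  have hφ : (Real.sqrt 5 + 1) / 2 = φ := by rw [goldenRatio, add_comm]
  have hψ : -((Real.sqrt 5 - 1) / 2) = ψ := by rw [goldenConj]; ring
  rw [rateI, neg_div, neg_div, hφ, hψ]
  split_ifs with hx hxψ
  · exact iSup_coe_mul_sub_ecfLambda_of_lt_neg_one hx
  · rw [iSup_coe_mul_sub_ecfLambda_of_le_goldenConj (not_lt.1 hx) hxψ, log_one_add_goldenRatio]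
  · exact iSup_coe_mul_sub_ecfLambda_of_goldenConj_lt (not_le.1 hxψ)
end
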